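/- arXiv:1307.2429 — 3 statements merged into one kernel-verified Lean document; each statement's English description precedes it below -/
import Mathlib

section
/- Assume in addition: ν > 0 and the adjoint of D₀ satisfies dom(D₀*) = dom(D₀) with D₀*u = 2νu − D₀u for all u ∈ dom(D₀); A is maximal monotone, i.e., Re⟨Au, u⟩ ≥ 0 for all u ∈ dom(A) and 1 + A maps dom(A) onto K; (P_a)_{a∈ℝ} is a family of self-adjoint idempotent bounded linear operators on K with P_a x → x as a → ∞ for every x ∈ K; A is causal and truncation-invariant with respect to (P_a): for every a ∈ ℝ and u ∈ dom(A), P_a u ∈ dom(A) and P_a(Au) = P_a(A(P_a u)); 𝓜 and 𝓝 are causal: P_a 𝓜 u = P_a 𝓜 (P_a u) and P_a 𝓝 u = P_a 𝓝 (P_a u) for all a ∈ ℝ, u ∈ K; and there is c > 0 with Re⟨D₀(𝓜u) + 𝓝u, P_a u⟩ ≥ c‖P_a u‖² for all u ∈ dom(D₀) and all a ∈ ℝ. Then B₀ is closable, its closure B maps dom(B) bijectively onto K with bounded inverse, and B⁻¹ is causal: for every a ∈ ℝ and f ∈ K with P_a f = 0 one has P_a(B⁻¹ f) = 0. -/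
/-!
The estimate `c ‖P_a u‖² ≤ Re ⟪B₀ u, P_a u⟫` is a closed condition on the graph, so it passes to
the closure `B`. Letting `a → ∞` makes `B₀` accretive, hence closable, and `B` bounded below,
hence injective with closed range; and `P_a (B u) = 0` forces `P_a u = 0`, which is causality.

The range is dense by regularisation: if `v ⊥ ran B₀`, then `y = R_ε* v` lies in `dom D₀` and,
as `R_ε` commutes with `A`, in `dom A*`, where `Re ⟪A* y, y⟫ ≥ 0` because the adjoint of a maximal
monotone operator is monotone. Positivity of `D₀ 𝓜 + 𝓝` at `y` then bounds `c ‖y‖²` by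
commutator terms that vanish as `ε → 0⁺`.
-/

open Filter

/-- The operator `B₀` with domain `dom D₀ ⊓ dom A`, `B₀ u = D₀(𝓜 u) + 𝓝 u + A u`. -/
noncomputable def B0 {K : Type*} [NormedAddCommGroup K] [InnerProductSpace ℂ K]
    (D₀ A : K →ₗ.[ℂ] K) (Mc N : K →L[ℂ] K)
    (hM : ∀ u ∈ D₀.domain, Mc u ∈ D₀.domain) : K →ₗ.[ℂ] K where
  domain := D₀.domain ⊓ A.domain
  toFun :=
    D₀.toFun.comp (LinearMap.codRestrict D₀.domain
        ((Mc : K →ₗ[ℂ] K).comp (D₀.domain ⊓ A.domain).subtype)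
        (fun u => hM _ (Submodule.mem_inf.mp u.2).1))
    + (N : K →ₗ[ℂ] K).comp (D₀.domain ⊓ A.domain).subtype
    + A.toFun.comp (Submodule.inclusion inf_le_right)

open scoped InnerProductSpace InnerProduct

theorem eq_zero_of_mul_sq_norm_nonpos {E : Type*} [NormedAddCommGroup E] {c : ℝ} (hc : 0 < c)
    {x : E} (h : c * ‖x‖ ^ 2 ≤ 0) : x = 0 :=
  norm_eq_zero.mp <| (pow_eq_zero_iff two_ne_zero).mp <|
    le_antisymm (nonpos_of_mul_nonpos_right h hc) (sq_nonneg _)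

section InnerProduct

variable {K : Type*} [NormedAddCommGroup K] [InnerProductSpace ℂ K]

theorem re_inner_self (x : K) : (⟪x, x⟫_ℂ).re = ‖x‖ ^ 2 :=
  inner_self_eq_norm_sq (𝕜 := ℂ) x

theorem norm_le_of_sq_le_re_inner {x y : K} (h : ‖x‖ ^ 2 ≤ (⟪x, y⟫_ℂ).re) : ‖x‖ ≤ ‖y‖ := by
  have := h.trans (re_inner_le_norm (𝕜 := ℂ) x y)
  nlinarith [norm_nonneg x, norm_nonneg y]

theorem norm_le_of_mul_sq_le_re_inner {c : ℝ} (hc : 0 < c) {u v : K}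
    (h : c * ‖u‖ ^ 2 ≤ (⟪v, u⟫_ℂ).re) : ‖u‖ ≤ c⁻¹ * ‖v‖ := by
  rw [le_inv_mul_iff₀ hc]
  have := h.trans (re_inner_le_norm (𝕜 := ℂ) v u)
  rcases (norm_nonneg u).eq_or_lt with hu | hu
  · rw [← hu, mul_zero]; exact norm_nonneg v
  · nlinarith

theorem le_re_inner_of_tendsto {ι : Type*} {l : Filter ι} [l.NeBot] {x : ι → K} {u v : K}
    {c : ℝ} (hx : Tendsto x l (nhds u)) (h : ∀ i, c * ‖x i‖ ^ 2 ≤ (⟪v, x i⟫_ℂ).re) :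
    c * ‖u‖ ^ 2 ≤ (⟪v, u⟫_ℂ).re :=
  le_of_tendsto_of_tendsto' ((hx.norm.pow 2).const_mul c)
    (Complex.continuous_re.continuousAt.tendsto.comp (tendsto_const_nhds.inner hx)) h

theorem norm_two_smul_sub_sq (a x : K) :
    ‖(2 : ℂ) • a - x‖ ^ 2 = 4 * (‖a‖ ^ 2 - (⟪a, x⟫_ℂ).re) + ‖x‖ ^ 2 := by
  rw [@norm_sub_sq ℂ, norm_smul, inner_smul_left]
  simp [mul_pow]
  ring

theorem inner_eq_inner_apply_of_isSelfAdjoint [CompleteSpace K] {P : K →L[ℂ] K}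
    (hsa : IsSelfAdjoint P) (hid : P.comp P = P) (x y : K) : ⟪x, P y⟫_ℂ = ⟪P x, P y⟫_ℂ :=
  calc ⟪x, P y⟫_ℂ = ⟪x, P (P y)⟫_ℂ := by rw [← P.comp_apply, hid]
    _ = ⟪P x, P y⟫_ℂ := (hsa.isSymmetric x (P y)).symm

/-- `T` is firmly nonexpansive iff `2T - 1` is a contraction, and the latter passes to `T†`. -/
theorem ContinuousLinearMap.sq_norm_adjoint_apply_le [CompleteSpace K] (T : K →L[ℂ] K)
    (hT : ∀ x, ‖T x‖ ^ 2 ≤ (⟪T x, x⟫_ℂ).re) (x : K) : ‖(T†) x‖ ^ 2 ≤ (⟪(T†) x, x⟫_ℂ).re := by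
  set S : K →L[ℂ] K := (2 : ℂ) • T - 1
  have hS : ‖S‖ ≤ 1 := by
    refine ContinuousLinearMap.opNorm_le_bound _ zero_le_one fun y => ?_
    rw [one_mul, ← sq_le_sq₀ (norm_nonneg _) (norm_nonneg _)]
    change ‖(2 : ℂ) • T y - y‖ ^ 2 ≤ ‖y‖ ^ 2
    linarith [norm_two_smul_sub_sq (T y) y, hT y]
  have hS' : (S†) x = (2 : ℂ) • (T†) x - x := by
    rw [← ContinuousLinearMap.star_eq_adjoint]
    simp [S, star_sub, star_smul, ContinuousLinearMap.star_eq_adjoint]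
  have h : ‖(2 : ℂ) • (T†) x - x‖ ≤ ‖x‖ := by
    rw [← hS']
    exact (S†).le_of_opNorm_le ((LinearIsometryEquiv.norm_map _ S).trans_le hS) x |>.trans_eq
      (one_mul _)
  have h2 := pow_le_pow_left₀ (norm_nonneg _) h 2
  rw [norm_two_smul_sub_sq] at h2
  linarith

end InnerProduct

namespace LinearPMap

section Monotone

variable {K : Type*} [NormedAddCommGroup K] [InnerProductSpace ℂ K] (A : K →ₗ.[ℂ] K)

theorem exists_resolvent (hmono : ∀ u : A.domain, 0 ≤ (⟪A u, u⟫_ℂ).re)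
    (hmax : ∀ y, ∃ u : A.domain, (u : K) + A u = y) :
    ∃ J : K →L[ℂ] K, (∀ u : A.domain, J (u + A u) = u) ∧ ∀ x, ‖J x‖ ^ 2 ≤ (⟪J x, x⟫_ℂ).re := by
  set Φ : A.domain →ₗ[ℂ] K := A.domain.subtype + A.toFun
  have hΦ : ∀ u : A.domain, ‖(u : K)‖ ^ 2 ≤ (⟪(u : K), Φ u⟫_ℂ).re := fun u => by
    have h := hmono u
    rw [← inner_conj_symm, Complex.conj_re] at h
    change _ ≤ (⟪(u : K), u + A u⟫_ℂ).re
    rw [inner_add_right, Complex.add_re, re_inner_self]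
    exact le_add_of_nonneg_right h
  have hinj : Function.Injective Φ := (injective_iff_map_eq_zero Φ).mpr fun u hu => by
    have h := hΦ u
    rw [hu, inner_zero_right, Complex.zero_re] at h
    have hu0 : (u : K) = 0 := norm_eq_zero.mp (by nlinarith [norm_nonneg (u : K)])
    exact_mod_cast hu0
  set e := LinearEquiv.ofBijective Φ ⟨hinj, hmax⟩
  have hJ : ∀ x, ‖(e.symm x : K)‖ ^ 2 ≤ (⟪(e.symm x : K), x⟫_ℂ).re := fun x => by
    simpa only [show Φ (e.symm x) = x from e.apply_symm_apply x] using hΦ (e.symm x)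
  refine ⟨(A.domain.subtype ∘ₗ e.symm.toLinearMap).mkContinuous 1 fun x => ?_, fun u => ?_, hJ⟩
  · rw [one_mul]; exact norm_le_of_sq_le_re_inner (hJ x)
  · change (e.symm (e u) : K) = u
    rw [e.symm_apply_apply]

/-- `hwq` says `w ∈ dom A*` with `A* w = q`: the adjoint of a maximal monotone operator is
monotone. -/
theorem re_inner_nonneg_of_inner_eq [CompleteSpace K]
    (hmono : ∀ u : A.domain, 0 ≤ (⟪A u, u⟫_ℂ).re) (hmax : ∀ y, ∃ u : A.domain, (u : K) + A u = y)
    {w q : K} (hwq : ∀ u : A.domain, ⟪A u, w⟫_ℂ = ⟪(u : K), q⟫_ℂ) : 0 ≤ (⟪q, w⟫_ℂ).re := by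
  obtain ⟨J, hJ, hJfirm⟩ := A.exists_resolvent hmono hmax
  have hJw : (J†) (w + q) = w := by
    refine ext_inner_left ℂ fun z => ?_
    obtain ⟨u, rfl⟩ := hmax z
    rw [ContinuousLinearMap.adjoint_inner_right, hJ, inner_add_right, ← hwq, inner_add_left]
  have h := J.sq_norm_adjoint_apply_le hJfirm (w + q)
  rw [hJw, inner_add_right, Complex.add_re, re_inner_self] at h
  rw [← inner_conj_symm, Complex.conj_re]
  linarith

theorem re_inner_apply_nonneg_of_isSelfAdjoint [CompleteSpace K]
    (hmono : ∀ u : A.domain, 0 ≤ (⟪A u, u⟫_ℂ).re) {P : K →L[ℂ] K} (hsa : IsSelfAdjoint P)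
    (hid : P.comp P = P) (hPdom : ∀ u ∈ A.domain, P u ∈ A.domain)
    (hPA : ∀ (u : K) (hu : u ∈ A.domain), P (A ⟨u, hu⟩) = P (A ⟨P u, hPdom u hu⟩))
    (z : A.domain) : 0 ≤ (⟪A z, P z⟫_ℂ).re := by
  rw [inner_eq_inner_apply_of_isSelfAdjoint hsa hid, hPA z z.2,
    ← inner_eq_inner_apply_of_isSelfAdjoint hsa hid]
  exact hmono ⟨P z, hPdom z z.2⟩

end Monotone

section Closure

variable {K : Type*} [NormedAddCommGroup K] [InnerProductSpace ℂ K] (T : K →ₗ.[ℂ] K)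

theorem le_re_inner_of_mem_closure_graph (Q : K →L[ℂ] K) {c : ℝ}
    (h : ∀ u : T.domain, c * ‖Q u‖ ^ 2 ≤ (⟪T u, Q u⟫_ℂ).re) {p : K × K}
    (hp : p ∈ T.graph.topologicalClosure) : c * ‖Q p.1‖ ^ 2 ≤ (⟪p.2, Q p.1⟫_ℂ).re := by
  have hclosed : _root_.IsClosed {p : K × K | c * ‖Q p.1‖ ^ 2 ≤ (⟪p.2, Q p.1⟫_ℂ).re} :=
    isClosed_le (by fun_prop) (by fun_prop)
  refine closure_minimal (fun q hq => ?_) hclosed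
    (by rwa [← SetLike.mem_coe, Submodule.topologicalClosure_coe] at hp)
  obtain ⟨u, hu1, hu2⟩ := T.mem_graph_iff.mp hq
  simpa only [Set.mem_ofPred_eq, ← hu1, ← hu2] using h u

/-- Accretivity passes to the closure of the graph; testing it on `(0, y) + t (w, T w)` with
`t → 0⁺` gives `0 ≤ Re ⟪y, w⟫` on the dense set `dom T`, so `y = 0`. -/
theorem isClosable_of_re_inner_nonneg (hdense : Dense (T.domain : Set K))
    (h : ∀ u : T.domain, 0 ≤ (⟪T u, u⟫_ℂ).re) : T.IsClosable := by
  refine ⟨T.graph.topologicalClosure.toLinearPMap,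
    (Submodule.toLinearPMap_graph_eq _ fun p hp hp1 => ?_).symm⟩
  have hacc : ∀ q ∈ T.graph.topologicalClosure, 0 ≤ (⟪q.2, q.1⟫_ℂ).re := fun q hq => by
    simpa using T.le_re_inner_of_mem_closure_graph (.id ℂ K) (c := 0) (by simpa using h) hq
  have hdom : ∀ w : T.domain, 0 ≤ (⟪p.2, w⟫_ℂ).re := fun w => by
    have ht : ∀ t : ℝ, 0 < t → 0 ≤ (⟪p.2, w⟫_ℂ).re + t * (⟪T w, w⟫_ℂ).re := fun t ht => by
      have hq := hacc (p + (t : ℂ) • ((w : K), T w))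
        (add_mem hp (Submodule.smul_mem _ _ (T.graph.le_topologicalClosure (T.mem_graph w))))
      simp only [Prod.fst_add, Prod.snd_add, Prod.smul_fst, Prod.smul_snd, hp1, zero_add,
        inner_smul_right, inner_add_left, inner_smul_left, Complex.conj_ofReal,
        Complex.re_ofReal_mul, Complex.add_re] at hq
      exact nonneg_of_mul_nonneg_right (by linarith) ht
    have hlim : Tendsto (fun t : ℝ => (⟪p.2, w⟫_ℂ).re + t * (⟪T w, w⟫_ℂ).re)
        (nhdsWithin 0 (Set.Ioi 0)) (nhds (⟪p.2, w⟫_ℂ).re) :=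
      tendsto_nhdsWithin_of_tendsto_nhds <| by
        simpa using tendsto_const_nhds.add ((tendsto_id (x := nhds (0 : ℝ))).mul_const _)
    exact ge_of_tendsto hlim (eventually_nhdsWithin_of_forall ht)
  have hclosed : _root_.IsClosed {x : K | 0 ≤ (⟪p.2, x⟫_ℂ).re} :=
    isClosed_le (by fun_prop) (by fun_prop)
  have h' := closure_minimal (fun x hx => hdom ⟨x, hx⟩) hclosed (hdense (-p.2))
  simp only [Set.mem_ofPred_eq, inner_neg_right, Complex.neg_re, re_inner_self] at h'
  exact norm_eq_zero.mp (by nlinarith [norm_nonneg p.2])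

end Closure

section BoundedBelow

variable {E F : Type*} [NormedAddCommGroup E] [NormedSpace ℂ E] [NormedAddCommGroup F]
  [InnerProductSpace ℂ F] (T : E →ₗ.[ℂ] F) {C : ℝ} (hC : ∀ u : T.domain, ‖(u : E)‖ ≤ C * ‖T u‖)
include hC

theorem injective_of_norm_le : Function.Injective T := by
  refine (injective_iff_map_eq_zero T.toFun).mpr fun u hu => ?_
  have h := hC u
  rw [show T u = 0 from hu, norm_zero, mul_zero] at h
  exact_mod_cast norm_le_zero_iff.mp h

theorem isClosed_range_of_norm_le [CompleteSpace E] [CompleteSpace F] (hT : T.IsClosed) :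
    _root_.IsClosed (Set.range T) := by
  have : CompleteSpace T.graph := _root_.IsClosed.completeSpace_coe (hs := hT)
  set f : T.graph →L[ℂ] F := (ContinuousLinearMap.snd ℂ E F).comp T.graph.subtypeL
  have hf : AntilipschitzWith (max C.toNNReal 1) f := f.antilipschitz_of_bound fun p => by
    obtain ⟨u, hu1, hu2⟩ := T.mem_graph_iff.mp p.2
    rw [show f p = T u from hu2.symm, Submodule.coe_norm, Prod.norm_def, ← hu1, ← hu2,
      NNReal.coe_max, NNReal.coe_one]
    exact max_le ((hC u).trans (by gcongr; exact (C.le_coe_toNNReal).trans (le_max_left _ _)))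
      (le_mul_of_one_le_left (norm_nonneg _) (le_max_right _ _))
  have hrange : Set.range T = Set.range f := by
    ext y
    rw [mem_range_iff]
    exact ⟨fun ⟨x, hx⟩ => ⟨⟨(x, y), hx⟩, rfl⟩, fun ⟨p, hp⟩ => ⟨p.1.1, hp ▸ p.2⟩⟩
  rw [hrange]
  exact hf.isClosed_range f.uniformContinuous

theorem surjective_of_norm_le [CompleteSpace E] [CompleteSpace F] (hT : T.IsClosed)
    (horth : ∀ v : F, (∀ u : T.domain, ⟪T u, v⟫_ℂ = 0) → v = 0) : Function.Surjective T := by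
  set Ran : Submodule ℂ F := LinearMap.range T.toFun
  have hclosed : _root_.IsClosed (Ran : Set F) := T.isClosed_range_of_norm_le hC hT
  have hbot : Ranᗮ = ⊥ := (Submodule.eq_bot_iff _).mpr fun v hv =>
    horth v fun u => (Submodule.mem_orthogonal Ran v).mp hv _ ⟨u, rfl⟩
  rw [← Submodule.topologicalClosure_eq_top_iff, hclosed.submodule_topologicalClosure_eq] at hbot
  intro y
  have hy : y ∈ Ran := hbot ▸ Submodule.mem_top
  exact LinearMap.mem_range.mp hy

end BoundedBelow

end LinearPMap
section Resolvent

variable {K : Type*} [NormedAddCommGroup K] [InnerProductSpace ℂ K]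
  {D₀ : K →ₗ.[ℂ] K} {R : ℝ → K →L[ℂ] K} (hRdom : ∀ ε, 0 < ε → ∀ x : K, R ε x ∈ D₀.domain)

theorem apply_resolvent_eq_resolvent_apply
    (hRval : ∀ ε (hε : 0 < ε) (x : K), D₀ ⟨R ε x, hRdom ε hε x⟩ = ε⁻¹ • (x - R ε x))
    (hRinv : ∀ ε, 0 < ε → ∀ u : D₀.domain, R ε ((u : K) + ε • D₀ u) = u)
    {ε : ℝ} (hε : 0 < ε) (z : D₀.domain) : D₀ ⟨R ε z, hRdom ε hε z⟩ = R ε (D₀ z) := by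
  have h := hRinv ε hε z
  rw [map_add, ContinuousLinearMap.map_smul_of_tower] at h
  rw [hRval ε hε, sub_eq_iff_eq_add'.mpr h.symm, smul_smul, inv_mul_cancel₀ hε.ne', one_smul]

variable {Mc Mop : K →L[ℂ] K} (hMdom : ∀ u ∈ D₀.domain, Mc u ∈ D₀.domain)

theorem apply_comp_resolvent_eq
    (hRval : ∀ ε (hε : 0 < ε) (x : K), D₀ ⟨R ε x, hRdom ε hε x⟩ = ε⁻¹ • (x - R ε x))
    (hMcomm : ∀ u : D₀.domain, Mc (D₀ u) = D₀ ⟨Mc u, hMdom u u.2⟩ + Mop u)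
    {ε : ℝ} (hε : 0 < ε) (x : K) :
    D₀ ⟨Mc (R ε x), hMdom _ (hRdom ε hε x)⟩ = Mc (ε⁻¹ • (x - R ε x)) - Mop (R ε x) := by
  rw [← hRval ε hε, hMcomm ⟨R ε x, hRdom ε hε x⟩, add_sub_cancel_right]

theorem resolvent_comp_eq
    (hRval : ∀ ε (hε : 0 < ε) (x : K), D₀ ⟨R ε x, hRdom ε hε x⟩ = ε⁻¹ • (x - R ε x))
    (hRinv : ∀ ε, 0 < ε → ∀ u : D₀.domain, R ε ((u : K) + ε • D₀ u) = u)
    (hMcomm : ∀ u : D₀.domain, Mc (D₀ u) = D₀ ⟨Mc u, hMdom u u.2⟩ + Mop u)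
    {ε : ℝ} (hε : 0 < ε) (x : K) :
    R ε (Mc x) = Mc (R ε x) + ε • R ε (Mop (R ε x)) := by
  set r : D₀.domain := ⟨R ε x, hRdom ε hε x⟩
  have hx : x = r + ε • D₀ r := by
    rw [hRval ε hε, smul_smul, mul_inv_cancel₀ hε.ne', one_smul, add_sub_cancel]
  have hMx : Mc x = (Mc r + ε • D₀ ⟨Mc r, hMdom r r.2⟩) + ε • Mop r := by
    conv_lhs => rw [hx]
    rw [map_add, ContinuousLinearMap.map_smul_of_tower, hMcomm, smul_add, add_assoc]
  rw [hMx, map_add, hRinv ε hε ⟨Mc r, hMdom r r.2⟩, ContinuousLinearMap.map_smul_of_tower]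

theorem resolvent_apply_comp_eq
    (hRval : ∀ ε (hε : 0 < ε) (x : K), D₀ ⟨R ε x, hRdom ε hε x⟩ = ε⁻¹ • (x - R ε x))
    (hRinv : ∀ ε, 0 < ε → ∀ u : D₀.domain, R ε ((u : K) + ε • D₀ u) = u)
    (hMcomm : ∀ u : D₀.domain, Mc (D₀ u) = D₀ ⟨Mc u, hMdom u u.2⟩ + Mop u)
    {ε : ℝ} (hε : 0 < ε) (z : D₀.domain) :
    R ε (D₀ ⟨Mc z, hMdom z z.2⟩) =
      D₀ ⟨Mc (R ε z), hMdom _ (hRdom ε hε z)⟩ + Mop (R ε z) - R ε (Mop (R ε z)) := by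
  rw [← apply_resolvent_eq_resolvent_apply hRdom hRval hRinv hε, hRval ε hε,
    resolvent_comp_eq hRdom hMdom hRval hRinv hMcomm hε,
    apply_comp_resolvent_eq hRdom hMdom hRval hMcomm hε]
  simp only [ContinuousLinearMap.map_smul_of_tower, map_sub, smul_sub, smul_add, smul_smul,
    inv_mul_cancel₀ hε.ne', one_smul]
  abel

end Resolvent

theorem tendsto_apply_of_norm_le {𝕜 E : Type*} [NontriviallyNormedField 𝕜] [NormedAddCommGroup E]
    [NormedSpace 𝕜 E] {ι : Type*} {l : Filter ι} {R : ι → E →L[𝕜] E} {C : ℝ}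
    (hR : ∀ᶠ i in l, ‖R i‖ ≤ C) {x : E} (hRx : Tendsto (fun i => R i x) l (nhds x))
    {y : ι → E} (hy : Tendsto y l (nhds x)) : Tendsto (fun i => R i (y i)) l (nhds x) := by
  rw [tendsto_iff_norm_sub_tendsto_zero] at hRx hy ⊢
  refine squeeze_zero' (Eventually.of_forall fun _ => norm_nonneg _) ?_
    (by simpa using (hy.const_mul C).add hRx)
  filter_upwards [hR] with i hi
  calc ‖R i (y i) - x‖ = ‖R i (y i - x) + (R i x - x)‖ := by rw [map_sub]; abel_nf
    _ ≤ C * ‖y i - x‖ + ‖R i x - x‖ :=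
      (norm_add_le _ _).trans (add_le_add_left ((R i).le_of_opNorm_le hi _) _)

section Kernel

variable {K : Type*} [NormedAddCommGroup K] [InnerProductSpace ℂ K]
  {D₀ A : K →ₗ.[ℂ] K} {R : ℝ → K →L[ℂ] K} {Mc N Mop : K →L[ℂ] K}
  (hRdom : ∀ ε, 0 < ε → ∀ x : K, R ε x ∈ D₀.domain)
  (hMdom : ∀ u ∈ D₀.domain, Mc u ∈ D₀.domain)

theorem B0_apply (u : (B0 D₀ A Mc N hMdom).domain) :
    B0 D₀ A Mc N hMdom u = D₀ ⟨Mc u, hMdom _ u.2.1⟩ + N u + A ⟨u, u.2.2⟩ :=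
  rfl

include hRdom in
theorem dense_domain_B0 (hAdense : Dense (A.domain : Set K))
    (hARdom : ∀ ε, 0 < ε → ∀ u ∈ A.domain, R ε u ∈ A.domain)
    (hRtendsto : ∀ x : K, Tendsto (fun ε => R ε x) (nhdsWithin 0 (Set.Ioi 0)) (nhds x)) :
    Dense ((B0 D₀ A Mc N hMdom).domain : Set K) := by
  refine dense_closure.mp (hAdense.mono fun x hx => mem_closure_of_tendsto (hRtendsto x) ?_)
  filter_upwards [self_mem_nhdsWithin] with ε hε
  exact ⟨hRdom ε hε x, hARdom ε hε x hx⟩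

theorem le_re_inner_B0_of_truncation {P : K →L[ℂ] K} {c : ℝ}
    (hpos : ∀ (u : K) (hu : u ∈ D₀.domain),
      c * ‖P u‖ ^ 2 ≤ (⟪D₀ ⟨Mc u, hMdom u hu⟩ + N u, P u⟫_ℂ).re)
    (hA : ∀ z : A.domain, 0 ≤ (⟪A z, P z⟫_ℂ).re) (u : (B0 D₀ A Mc N hMdom).domain) :
    c * ‖P u‖ ^ 2 ≤ (⟪B0 D₀ A Mc N hMdom u, P u⟫_ℂ).re := by
  rw [B0_apply, inner_add_left, Complex.add_re]
  linarith [hpos u u.2.1, hA ⟨u, u.2.2⟩]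

variable [CompleteSpace K]

/-- Testing `v ⊥ ran B₀` against `R ε z` for `z ∈ dom A` shows `y ∈ dom A*` with `A* y = -L† v`,
where `L = (D₀ 𝓜 + 𝓝) R ε` is bounded; monotonicity of `A*` gives the sign. -/
theorem re_inner_B0_resolvent_nonpos
    (hRval : ∀ ε (hε : 0 < ε) (x : K), D₀ ⟨R ε x, hRdom ε hε x⟩ = ε⁻¹ • (x - R ε x))
    (hMcomm : ∀ u : D₀.domain, Mc (D₀ u) = D₀ ⟨Mc u, hMdom u u.2⟩ + Mop u)
    (hARdom : ∀ ε, 0 < ε → ∀ u ∈ A.domain, R ε u ∈ A.domain)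
    (hARcomm : ∀ ε (hε : 0 < ε) (u : A.domain), A ⟨R ε u, hARdom ε hε u u.2⟩ = R ε (A u))
    (hAmono : ∀ u : A.domain, 0 ≤ (⟪A u, u⟫_ℂ).re)
    (hAmax : ∀ y : K, ∃ u : A.domain, (u : K) + A u = y)
    {v : K} (hv : ∀ u : (B0 D₀ A Mc N hMdom).domain, ⟪B0 D₀ A Mc N hMdom u, v⟫_ℂ = 0)
    {ε : ℝ} (hε : 0 < ε) {y : K} (hy : ∀ x, ⟪R ε x, v⟫_ℂ = ⟪x, y⟫_ℂ) :
    (⟪D₀ ⟨Mc (R ε y), hMdom _ (hRdom ε hε y)⟩ + N (R ε y), v⟫_ℂ).re ≤ 0 := by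
  set L : K →L[ℂ] K := ε⁻¹ • Mc.comp (1 - R ε) - Mop.comp (R ε) + N.comp (R ε)
  have hL : ∀ z, L z = D₀ ⟨Mc (R ε z), hMdom _ (hRdom ε hε z)⟩ + N (R ε z) := fun z => by
    rw [apply_comp_resolvent_eq hRdom hMdom hRval hMcomm hε]
    simp [L, ContinuousLinearMap.map_smul_of_tower]
  have hA : ∀ z : A.domain, ⟪A z, y⟫_ℂ = ⟪(z : K), -((L†) v)⟫_ℂ := fun z => by
    have h0 := hv ⟨R ε z, hRdom ε hε z, hARdom ε hε z z.2⟩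
    rw [B0_apply] at h0
    simp only at h0
    rw [hARcomm ε hε z, ← hL] at h0
    rw [← hy, inner_neg_right, ContinuousLinearMap.adjoint_inner_right, eq_neg_iff_add_eq_zero,
      add_comm, ← inner_add_left, h0]
  have h := A.re_inner_nonneg_of_inner_eq hAmono hAmax hA
  rw [inner_neg_left, ContinuousLinearMap.adjoint_inner_left, Complex.neg_re, ← inner_conj_symm,
    Complex.conj_re, hL] at h
  linarith

/-- Moving `R ε` across `D₀ 𝓜 + 𝓝` costs only commutator terms, which vanish as `ε → 0⁺`. -/
theorem mul_sq_norm_le_of_inner_resolvent_eq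
    (hRval : ∀ ε (hε : 0 < ε) (x : K), D₀ ⟨R ε x, hRdom ε hε x⟩ = ε⁻¹ • (x - R ε x))
    (hRinv : ∀ ε, 0 < ε → ∀ u : D₀.domain, R ε ((u : K) + ε • D₀ u) = u)
    (hMcomm : ∀ u : D₀.domain, Mc (D₀ u) = D₀ ⟨Mc u, hMdom u u.2⟩ + Mop u)
    (hARdom : ∀ ε, 0 < ε → ∀ u ∈ A.domain, R ε u ∈ A.domain)
    (hARcomm : ∀ ε (hε : 0 < ε) (u : A.domain), A ⟨R ε u, hARdom ε hε u u.2⟩ = R ε (A u))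
    (hAmono : ∀ u : A.domain, 0 ≤ (⟪A u, u⟫_ℂ).re)
    (hAmax : ∀ y : K, ∃ u : A.domain, (u : K) + A u = y) {c : ℝ}
    (hpos : ∀ (u : K) (hu : u ∈ D₀.domain), c * ‖u‖ ^ 2 ≤ (⟪D₀ ⟨Mc u, hMdom u hu⟩ + N u, u⟫_ℂ).re)
    {v : K} (hv : ∀ u : (B0 D₀ A Mc N hMdom).domain, ⟪B0 D₀ A Mc N hMdom u, v⟫_ℂ = 0)
    {ε : ℝ} (hε : 0 < ε) {y : K} (hy : ∀ x, ⟪R ε x, v⟫_ℂ = ⟪x, y⟫_ℂ) (hyD : y ∈ D₀.domain) :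
    c * ‖y‖ ^ 2 ≤
      (⟪Mop (R ε y), v - y⟫_ℂ + ⟪N y, y⟫_ℂ - ⟪N (R ε y), v⟫_ℂ).re := by
  have hsplit : ⟪D₀ ⟨Mc y, hMdom _ hyD⟩ + N y, y⟫_ℂ =
      ⟪D₀ ⟨Mc (R ε y), hMdom _ (hRdom ε hε y)⟩ + N (R ε y), v⟫_ℂ +
        (⟪Mop (R ε y), v - y⟫_ℂ + ⟪N y, y⟫_ℂ - ⟪N (R ε y), v⟫_ℂ) := by
    rw [← hy, map_add, resolvent_apply_comp_eq hRdom hMdom hRval hRinv hMcomm hε ⟨y, hyD⟩]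
    simp only [inner_add_left, inner_sub_left, inner_sub_right, hy]
    ring
  have h := hpos y hyD
  rw [hsplit, Complex.add_re] at h
  linarith [re_inner_B0_resolvent_nonpos hRdom hMdom hRval hMcomm hARdom hARcomm hAmono hAmax
    hv hε hy]

theorem eq_zero_of_forall_inner_B0_eq_zero
    (hRval : ∀ ε (hε : 0 < ε) (x : K), D₀ ⟨R ε x, hRdom ε hε x⟩ = ε⁻¹ • (x - R ε x))
    (hRinv : ∀ ε, 0 < ε → ∀ u : D₀.domain, R ε ((u : K) + ε • D₀ u) = u)
    (hRnorm : ∀ ε, 0 < ε → ‖R ε‖ ≤ 1)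
    (hRtendsto : ∀ x : K, Tendsto (fun ε => R ε x) (nhdsWithin 0 (Set.Ioi 0)) (nhds x))
    (hRadjdom : ∀ ε, 0 < ε → ∀ x : K, ((R ε)†) x ∈ D₀.domain)
    (hRadjtendsto : ∀ x : K,
      Tendsto (fun ε => ((R ε)†) x) (nhdsWithin 0 (Set.Ioi 0)) (nhds x))
    (hMcomm : ∀ u : D₀.domain, Mc (D₀ u) = D₀ ⟨Mc u, hMdom u u.2⟩ + Mop u)
    (hARdom : ∀ ε, 0 < ε → ∀ u ∈ A.domain, R ε u ∈ A.domain)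
    (hARcomm : ∀ ε (hε : 0 < ε) (u : A.domain), A ⟨R ε u, hARdom ε hε u u.2⟩ = R ε (A u))
    (hAmono : ∀ u : A.domain, 0 ≤ (⟪A u, u⟫_ℂ).re)
    (hAmax : ∀ y : K, ∃ u : A.domain, (u : K) + A u = y)
    {c : ℝ} (hc : 0 < c)
    (hpos : ∀ (u : K) (hu : u ∈ D₀.domain), c * ‖u‖ ^ 2 ≤ (⟪D₀ ⟨Mc u, hMdom u hu⟩ + N u, u⟫_ℂ).re)
    {v : K} (hv : ∀ u : (B0 D₀ A Mc N hMdom).domain, ⟪B0 D₀ A Mc N hMdom u, v⟫_ℂ = 0) :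
    v = 0 := by
  set y : ℝ → K := fun ε => ((R ε)†) v
  have hy : Tendsto y (nhdsWithin 0 (Set.Ioi 0)) (nhds v) := hRadjtendsto v
  have hRy : Tendsto (fun ε => R ε (y ε)) (nhdsWithin 0 (Set.Ioi 0)) (nhds v) :=
    tendsto_apply_of_norm_le (eventually_nhdsWithin_of_forall hRnorm) (hRtendsto v) hy
  have h1 : Tendsto (fun ε => ⟪Mop (R ε (y ε)), v - y ε⟫_ℂ) (nhdsWithin 0 (Set.Ioi 0))
      (nhds ⟪Mop v, v - v⟫_ℂ) :=
    ((Mop.continuous.tendsto v).comp hRy).inner (tendsto_const_nhds.sub hy)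
  have h2 : Tendsto (fun ε => ⟪N (y ε), y ε⟫_ℂ) (nhdsWithin 0 (Set.Ioi 0)) (nhds ⟪N v, v⟫_ℂ) :=
    ((N.continuous.tendsto v).comp hy).inner hy
  have h3 : Tendsto (fun ε => ⟪N (R ε (y ε)), v⟫_ℂ) (nhdsWithin 0 (Set.Ioi 0))
      (nhds ⟪N v, v⟫_ℂ) :=
    ((N.continuous.tendsto v).comp hRy).inner tendsto_const_nhds
  have herr := (Complex.continuous_re.tendsto _).comp ((h1.add h2).sub h3)
  rw [sub_self, inner_zero_right, zero_add, sub_self, Complex.zero_re] at herr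
  have hv0 : c * ‖v‖ ^ 2 ≤ 0 :=
    le_of_tendsto_of_tendsto ((hy.norm.pow 2).const_mul c) herr <|
      eventually_nhdsWithin_of_forall fun ε hε =>
        mul_sq_norm_le_of_inner_resolvent_eq hRdom hMdom hRval hRinv hMcomm hARdom hARcomm hAmono
          hAmax hpos hv hε (fun x => (ContinuousLinearMap.adjoint_inner_right _ _ _).symm)
          (hRadjdom ε hε v)
  exact eq_zero_of_mul_sq_norm_nonpos hc hv0

end Kernel

theorem stmt5_general
    {K : Type*} [NormedAddCommGroup K] [InnerProductSpace ℂ K] [CompleteSpace K]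
    (D₀ : K →ₗ.[ℂ] K)
    (R : ℝ → K →L[ℂ] K)
    (hRdom : ∀ ε, 0 < ε → ∀ x : K, R ε x ∈ D₀.domain)
    (hRval : ∀ ε (hε : 0 < ε) (x : K),
      D₀ ⟨R ε x, hRdom ε hε x⟩ = ε⁻¹ • (x - R ε x))
    (hRinv : ∀ ε, 0 < ε → ∀ u : D₀.domain, R ε ((u : K) + ε • D₀ u) = u)
    (hRnorm : ∀ ε, 0 < ε → ‖R ε‖ ≤ 1)
    (hRtendsto : ∀ x : K, Tendsto (fun ε => R ε x) (nhdsWithin 0 (Set.Ioi 0)) (nhds x))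
    (hRadjdom : ∀ ε, 0 < ε → ∀ x : K,
      ContinuousLinearMap.adjoint (R ε) x ∈ D₀.adjoint.domain)
    (hRadjtendsto : ∀ x : K,
      Tendsto (fun ε => ContinuousLinearMap.adjoint (R ε) x) (nhdsWithin 0 (Set.Ioi 0)) (nhds x))
    (Mc N Mop : K →L[ℂ] K)
    (hMdom : ∀ u ∈ D₀.domain, Mc u ∈ D₀.domain)
    (hMcomm : ∀ u : D₀.domain, Mc (D₀ u) = D₀ ⟨Mc u, hMdom u u.2⟩ + Mop u)
    (A : K →ₗ.[ℂ] K) (hAdense : Dense (A.domain : Set K))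
    (hARdom : ∀ ε, 0 < ε → ∀ u ∈ A.domain, R ε u ∈ A.domain)
    (hARcomm : ∀ ε (hε : 0 < ε) (u : A.domain),
      A ⟨R ε u, hARdom ε hε u u.2⟩ = R ε (A u))
    (hadjdom : D₀.adjoint.domain = D₀.domain)
    -- `A` is maximal monotone
    (hAmono : ∀ u : A.domain, 0 ≤ (inner ℂ (A u) (u : K) : ℂ).re)
    (hAmax : ∀ y : K, ∃ u : A.domain, (u : K) + A u = y)
    -- the family of truncation projections
    (P : ℝ → K →L[ℂ] K)
    (hPsa : ∀ a : ℝ, IsSelfAdjoint (P a))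
    (hPidem : ∀ a : ℝ, (P a).comp (P a) = P a)
    (hPtendsto : ∀ x : K, Tendsto (fun a => P a x) atTop (nhds x))
    -- `A` is causal and truncation-invariant
    (hPAdom : ∀ (a : ℝ), ∀ u ∈ A.domain, P a u ∈ A.domain)
    (hPAcausal : ∀ (a : ℝ) (u : K) (hu : u ∈ A.domain),
      P a (A ⟨u, hu⟩) = P a (A ⟨P a u, hPAdom a u hu⟩))
    -- positive definiteness of `∂₀𝓜 + 𝓝`
    (c : ℝ) (hc : 0 < c)
    (hpos : ∀ (a : ℝ) (u : K) (hu : u ∈ D₀.domain),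
      c * ‖P a u‖ ^ 2 ≤ (inner ℂ (D₀ ⟨Mc u, hMdom u hu⟩ + N u) (P a u) : ℂ).re) :
    (B0 D₀ A Mc N hMdom).IsClosable ∧
    Function.Bijective (fun u : (B0 D₀ A Mc N hMdom).closure.domain =>
      (B0 D₀ A Mc N hMdom).closure u) ∧
    (∃ C : ℝ, 0 ≤ C ∧ ∀ u : (B0 D₀ A Mc N hMdom).closure.domain,
      ‖(u : K)‖ ≤ C * ‖(B0 D₀ A Mc N hMdom).closure u‖) ∧
    -- causality of the solution operator `B⁻¹`
    (∀ (a : ℝ) (u : (B0 D₀ A Mc N hMdom).closure.domain),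
      P a ((B0 D₀ A Mc N hMdom).closure u) = 0 → P a (u : K) = 0) := by
  set B₀ := B0 D₀ A Mc N hMdom
  have hB₀ : ∀ a (u : B₀.domain), c * ‖P a u‖ ^ 2 ≤ (⟪B₀ u, P a u⟫_ℂ).re := fun a =>
    le_re_inner_B0_of_truncation hMdom (hpos a)
      (A.re_inner_apply_nonneg_of_isSelfAdjoint hAmono (hPsa a) (hPidem a) (hPAdom a) (hPAcausal a))
  have hclosable : B₀.IsClosable :=
    B₀.isClosable_of_re_inner_nonneg (dense_domain_B0 hRdom hMdom hAdense hARdom hRtendsto)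
      fun u => (mul_nonneg hc.le (sq_nonneg _)).trans
        (le_re_inner_of_tendsto (hPtendsto u) (hB₀ · u))
  set B := B₀.closure
  have hB : ∀ a (u : B.domain), c * ‖P a u‖ ^ 2 ≤ (⟪B u, P a u⟫_ℂ).re := fun a u =>
    B₀.le_re_inner_of_mem_closure_graph (P a) (hB₀ a)
      (hclosable.graph_closure_eq_closure_graph ▸ B.mem_graph u)
  have hbound : ∀ u : B.domain, ‖(u : K)‖ ≤ c⁻¹ * ‖B u‖ := fun u =>
    norm_le_of_mul_sq_le_re_inner hc (le_re_inner_of_tendsto (hPtendsto u) (hB · u))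
  have horth : ∀ v : K, (∀ u : B.domain, ⟪B u, v⟫_ℂ = 0) → v = 0 := fun v hv =>
    eq_zero_of_forall_inner_B0_eq_zero hRdom hMdom hRval hRinv hRnorm hRtendsto
      (fun ε hε x => hadjdom ▸ hRadjdom ε hε x) hRadjtendsto hMcomm hARdom hARcomm hAmono hAmax
      hc (fun u hu => le_re_inner_of_tendsto (hPtendsto u) (hpos · u hu))
      fun u => (congrArg (⟪·, v⟫_ℂ) (B₀.le_closure.2 (y := ⟨u, B₀.le_closure.1 u.2⟩) rfl)).trans
        (hv _)
  refine ⟨hclosable, ⟨B.injective_of_norm_le hbound,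
    B.surjective_of_norm_le hbound hclosable.closure_isClosed horth⟩,
    ⟨c⁻¹, inv_nonneg.mpr hc.le, hbound⟩, fun a u hu => ?_⟩
  have h := hB a u
  rw [inner_eq_inner_apply_of_isSelfAdjoint (hPsa a) (hPidem a), hu, inner_zero_left,
    Complex.zero_re] at h
  exact eq_zero_of_mul_sq_norm_nonpos hc h

theorem stmt5
    {K : Type*} [NormedAddCommGroup K] [InnerProductSpace ℂ K] [CompleteSpace K]
    (D₀ : K →ₗ.[ℂ] K) (hD₀dense : Dense (D₀.domain : Set K)) (hD₀closed : D₀.IsClosed)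
    (R : ℝ → K →L[ℂ] K)
    (hRdom : ∀ ε, 0 < ε → ∀ x : K, R ε x ∈ D₀.domain)
    (hRval : ∀ ε (hε : 0 < ε) (x : K),
      D₀ ⟨R ε x, hRdom ε hε x⟩ = ε⁻¹ • (x - R ε x))
    (hRinv : ∀ ε, 0 < ε → ∀ u : D₀.domain, R ε ((u : K) + ε • D₀ u) = u)
    (hRnorm : ∀ ε, 0 < ε → ‖R ε‖ ≤ 1)
    (hRtendsto : ∀ x : K, Tendsto (fun ε => R ε x) (nhdsWithin 0 (Set.Ioi 0)) (nhds x))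
    (hRadjdom : ∀ ε, 0 < ε → ∀ x : K,
      ContinuousLinearMap.adjoint (R ε) x ∈ D₀.adjoint.domain)
    (hRadjval : ∀ ε (hε : 0 < ε) (x : K),
      D₀.adjoint ⟨ContinuousLinearMap.adjoint (R ε) x, hRadjdom ε hε x⟩
        = ε⁻¹ • (x - ContinuousLinearMap.adjoint (R ε) x))
    (hRadjtendsto : ∀ x : K,
      Tendsto (fun ε => ContinuousLinearMap.adjoint (R ε) x) (nhdsWithin 0 (Set.Ioi 0)) (nhds x))
    (Mc N Mop : K →L[ℂ] K)
    (hMdom : ∀ u ∈ D₀.domain, Mc u ∈ D₀.domain)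
    (hMcomm : ∀ u : D₀.domain, Mc (D₀ u) = D₀ ⟨Mc u, hMdom u u.2⟩ + Mop u)
    (A : K →ₗ.[ℂ] K) (hAdense : Dense (A.domain : Set K)) (hAclosed : A.IsClosed)
    (hARdom : ∀ ε, 0 < ε → ∀ u ∈ A.domain, R ε u ∈ A.domain)
    (hARcomm : ∀ ε (hε : 0 < ε) (u : A.domain),
      A ⟨R ε u, hARdom ε hε u u.2⟩ = R ε (A u))
    -- the adjoint of `D₀` is `2ν - D₀`
    (ν : ℝ) (hν : 0 < ν)
    (hadjdom : D₀.adjoint.domain = D₀.domain)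
    (hadjval : ∀ (u : K) (hu : u ∈ D₀.domain) (hu' : u ∈ D₀.adjoint.domain),
      D₀.adjoint ⟨u, hu'⟩ = ((2 * ν : ℝ) : ℂ) • u - D₀ ⟨u, hu⟩)
    -- `A` is maximal monotone
    (hAmono : ∀ u : A.domain, 0 ≤ (inner ℂ (A u) (u : K) : ℂ).re)
    (hAmax : ∀ y : K, ∃ u : A.domain, (u : K) + A u = y)
    -- the family of truncation projections
    (P : ℝ → K →L[ℂ] K)
    (hPsa : ∀ a : ℝ, IsSelfAdjoint (P a))
    (hPidem : ∀ a : ℝ, (P a).comp (P a) = P a)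
    (hPtendsto : ∀ x : K, Tendsto (fun a => P a x) atTop (nhds x))
    -- `A` is causal and truncation-invariant
    (hPAdom : ∀ (a : ℝ), ∀ u ∈ A.domain, P a u ∈ A.domain)
    (hPAcausal : ∀ (a : ℝ) (u : K) (hu : u ∈ A.domain),
      P a (A ⟨u, hu⟩) = P a (A ⟨P a u, hPAdom a u hu⟩))
    -- `𝓜` and `𝓝` are causal
    (hMcausal : ∀ (a : ℝ) (u : K), P a (Mc u) = P a (Mc (P a u)))
    (hNcausal : ∀ (a : ℝ) (u : K), P a (N u) = P a (N (P a u)))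
    -- positive definiteness of `∂₀𝓜 + 𝓝`
    (c : ℝ) (hc : 0 < c)
    (hpos : ∀ (a : ℝ) (u : K) (hu : u ∈ D₀.domain),
      c * ‖P a u‖ ^ 2 ≤ (inner ℂ (D₀ ⟨Mc u, hMdom u hu⟩ + N u) (P a u) : ℂ).re) :
    (B0 D₀ A Mc N hMdom).IsClosable ∧
    Function.Bijective (fun u : (B0 D₀ A Mc N hMdom).closure.domain =>
      (B0 D₀ A Mc N hMdom).closure u) ∧
    (∃ C : ℝ, 0 ≤ C ∧ ∀ u : (B0 D₀ A Mc N hMdom).closure.domain,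
      ‖(u : K)‖ ≤ C * ‖(B0 D₀ A Mc N hMdom).closure u‖) ∧
    -- causality of the solution operator `B⁻¹`
    (∀ (a : ℝ) (u : (B0 D₀ A Mc N hMdom).closure.domain),
      P a ((B0 D₀ A Mc N hMdom).closure u) = 0 → P a (u : K) = 0) :=
  stmt5_general D₀ R hRdom hRval hRinv hRnorm hRtendsto hRadjdom hRadjtendsto Mc N Mop hMdom hMcomm
    A hAdense hARdom hARcomm hadjdom hAmono hAmax P hPsa hPidem hPtendsto hPAdom hPAcausal c hc hpos
end

section
/- Let c > 0. Let T : dom(T) ⊆ L²_ν(ℝ;H) → L²_ν(ℝ;H) be a linear operator such that Re⟨Tu, 𝟙_{≤a}u⟩ ≥ c‖𝟙_{≤a}u‖² for all u ∈ dom(T) and all a ∈ ℝ. Let A : dom(A) ⊆ L²_ν(ℝ;H) → L²_ν(ℝ;H) be a linear operator that is monotone (Re⟨Au, u⟩ ≥ 0 for all u ∈ dom(A)), causal, satisfies 𝟙_{≤0}u ∈ dom(A) for all u ∈ dom(A), and commutes with all translations: for every b ∈ ℝ and u ∈ dom(A), τ_b u ∈ dom(A) and A(τ_b u) = τ_b(Au).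 Then for every a ∈ ℝ and every φ ∈ dom(T) ∩ dom(A): Re⟨Tφ + Aφ, 𝟙_{≤a}φ⟩ ≥ c‖𝟙_{≤a}φ‖². -/
open MeasureTheory Filter

/-- The exponentially weighted measure `exp(-2νt) dt` on `ℝ`. -/
noncomputable def wMeasure (ν : ℝ) : Measure ℝ :=
  volume.withDensity fun t => ENNReal.ofReal (Real.exp (-2 * ν * t))

/-- Multiplication by the indicator function of `(-∞, a]` on `L²_ν(ℝ; H)`. -/
noncomputable def trunc {H : Type*} [NormedAddCommGroup H] (ν a : ℝ)
    (f : Lp H 2 (wMeasure ν)) : Lp H 2 (wMeasure ν) :=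
  MemLp.toLp (Set.indicator (Set.Iic a) f) ((Lp.memLp f).indicator measurableSet_Iic)

/-!
Translating by `a` turns `𝟙_{≤a}` into `𝟙_{≤0}` and multiplies the weighted inner product by
`exp(2νa)`, so translation invariance of `A` reduces `0 ≤ Re⟪Aφ, 𝟙_{≤a}φ⟫` to the case `a = 0`.
There causality gives `𝟙_{≤0} A v = 𝟙_{≤0} A (𝟙_{≤0} v)`, hence
`⟪A v, 𝟙_{≤0} v⟫ = ⟪A (𝟙_{≤0} v), 𝟙_{≤0} v⟫`, whose real part is nonnegative by monotonicity.
Adding the estimate for `T` gives the claim.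
-/

open scoped InnerProductSpace

section WeightedMeasure

variable {E : Type*} [NormedAddCommGroup E] [NormedSpace ℝ E]

theorem ae_wMeasure (ν : ℝ) : ae (wMeasure ν) = ae volume := by
  refine le_antisymm (withDensity_absolutelyContinuous _ _).ae_le fun s hs => ?_
  have hs' := (ae_withDensity_iff (p := (· ∈ s)) (by fun_prop)).1 hs
  filter_upwards [hs'] with t ht
  exact ht (by positivity)

theorem integral_wMeasure (ν : ℝ) (g : ℝ → E) :
    ∫ t, g t ∂wMeasure ν = ∫ t, Real.exp (-2 * ν * t) • g t := by
  rw [wMeasure, integral_withDensity_eq_integral_toReal_smul (by fun_prop)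
    (ae_of_all _ fun _ => ENNReal.ofReal_lt_top)]
  simp only [ENNReal.toReal_ofReal (Real.exp_pos _).le]

theorem integral_wMeasure_comp_add_right (ν a : ℝ) (g : ℝ → E) :
    ∫ t, g (t + a) ∂wMeasure ν = Real.exp (2 * ν * a) • ∫ t, g t ∂wMeasure ν := by
  have hweight (t : ℝ) :
      Real.exp (-2 * ν * t) = Real.exp (2 * ν * a) * Real.exp (-2 * ν * (t + a)) := by
    rw [← Real.exp_add]; ring_nf
  rw [integral_wMeasure, integral_wMeasure,
    ← integral_add_right_eq_self (fun s => Real.exp (-2 * ν * s) • g s) a, ← integral_smul]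
  exact integral_congr_ae (ae_of_all _ fun t => by simp only [hweight t, mul_smul])

end WeightedMeasure

section Truncation

variable {H : Type*} [NormedAddCommGroup H] {ν : ℝ}

theorem coeFn_trunc (a : ℝ) (f : Lp H 2 (wMeasure ν)) :
    ⇑(trunc ν a f) =ᵐ[wMeasure ν] Set.indicator (Set.Iic a) f :=
  MemLp.coeFn_toLp _

theorem trunc_sub (a : ℝ) (f g : Lp H 2 (wMeasure ν)) :
    trunc ν a (f - g) = trunc ν a f - trunc ν a g := by
  apply Lp.ext
  filter_upwards [coeFn_trunc a (f - g), coeFn_trunc a f, coeFn_trunc a g, Lp.coeFn_sub f g,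
    Lp.coeFn_sub (trunc ν a f) (trunc ν a g)] with t h h₁ h₂ hsub hsub'
  rw [h, hsub', Pi.sub_apply, h₁, h₂, Set.indicator_apply, Set.indicator_apply,
    Set.indicator_apply, hsub]
  split_ifs <;> simp

theorem trunc_trunc (a : ℝ) (f : Lp H 2 (wMeasure ν)) :
    trunc ν a (trunc ν a f) = trunc ν a f := by
  apply Lp.ext
  filter_upwards [coeFn_trunc a (trunc ν a f), coeFn_trunc a f] with t h h₁
  rw [h, Set.indicator_apply, h₁, Set.indicator_apply]
  split_ifs <;> rfl

variable [InnerProductSpace ℂ H]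

theorem inner_trunc_right (a : ℝ) (f g : Lp H 2 (wMeasure ν)) :
    ⟪f, trunc ν a g⟫_ℂ = ⟪trunc ν a f, trunc ν a g⟫_ℂ := by
  rw [L2.inner_def, L2.inner_def]
  refine integral_congr_ae ?_
  filter_upwards [coeFn_trunc a f, coeFn_trunc a g] with t hf hg
  rw [hf, hg, Set.indicator_apply, Set.indicator_apply]
  split_ifs <;> simp

theorem inner_trunc_comp_add_right {a : ℝ} {f g f' g' : Lp H 2 (wMeasure ν)}
    (hf : ⇑f' =ᵐ[volume] fun t => f (t + a)) (hg : ⇑g' =ᵐ[volume] fun t => g (t + a)) :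
    ⟪f', trunc ν 0 g'⟫_ℂ = Real.exp (2 * ν * a) • ⟪f, trunc ν a g⟫_ℂ := by
  set F : ℝ → ℂ := fun t => ⟪f t, Set.indicator (Set.Iic a) g t⟫_ℂ
  have hF : ⟪f, trunc ν a g⟫_ℂ = ∫ t, F t ∂wMeasure ν := by
    rw [L2.inner_def]
    refine integral_congr_ae ?_
    filter_upwards [coeFn_trunc a g] with t hg
    rw [hg]
  have hF' : ⟪f', trunc ν 0 g'⟫_ℂ = ∫ t, F (t + a) ∂wMeasure ν := by
    rw [L2.inner_def]
    have htr := coeFn_trunc 0 g'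
    rw [EventuallyEq, ae_wMeasure] at htr
    refine integral_congr_ae ?_
    rw [EventuallyEq, ae_wMeasure]
    filter_upwards [hf, hg, htr] with t hf hg htr
    simp only [F, htr, hf, Set.indicator_apply, Set.mem_Iic, hg, add_le_iff_nonpos_left]
  rw [hF, hF', integral_wMeasure_comp_add_right]

end Truncation

section Causal

variable {H : Type*} [NormedAddCommGroup H] [InnerProductSpace ℂ H] {ν : ℝ}
  {A : Lp H 2 (wMeasure ν) →ₗ.[ℂ] Lp H 2 (wMeasure ν)}

theorem trunc_apply_eq_of_causal {a : ℝ}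
    (hA : ∀ (u : Lp H 2 (wMeasure ν)) (hu : u ∈ A.domain),
      trunc ν a u = 0 → trunc ν a (A ⟨u, hu⟩) = 0)
    (u v : A.domain) (huv : trunc ν a (u : Lp H 2 (wMeasure ν)) = trunc ν a v) :
    trunc ν a (A u) = trunc ν a (A v) := by
  have h := hA ((u - v : A.domain) : Lp H 2 (wMeasure ν)) (u - v).2
    (by rw [Submodule.coe_sub, trunc_sub, huv, sub_self])
  rwa [Subtype.coe_eta, A.map_sub, trunc_sub, sub_eq_zero] at h

theorem re_inner_trunc_nonneg_of_causal {a : ℝ}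
    (hmono : ∀ u : A.domain, 0 ≤ (⟪A u, (u : Lp H 2 (wMeasure ν))⟫_ℂ).re)
    (hcausal : ∀ (u : Lp H 2 (wMeasure ν)) (hu : u ∈ A.domain),
      trunc ν a u = 0 → trunc ν a (A ⟨u, hu⟩) = 0)
    (u : A.domain) (hu : trunc ν a (u : Lp H 2 (wMeasure ν)) ∈ A.domain) :
    0 ≤ (⟪A u, trunc ν a (u : Lp H 2 (wMeasure ν))⟫_ℂ).re := by
  have h := trunc_apply_eq_of_causal hcausal u ⟨_, hu⟩
    (trunc_trunc a (u : Lp H 2 (wMeasure ν))).symm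
  rw [inner_trunc_right, h, ← inner_trunc_right]
  exact hmono ⟨_, hu⟩

end Causal

theorem stmt6_general
    {H : Type*} [NormedAddCommGroup H] [InnerProductSpace ℂ H]
    (ν : ℝ) (c : ℝ)
    (T : Lp H 2 (wMeasure ν) →ₗ.[ℂ] Lp H 2 (wMeasure ν))
    (hT : ∀ (u : Lp H 2 (wMeasure ν)) (hu : u ∈ T.domain) (a : ℝ),
      c * ‖trunc ν a u‖ ^ 2 ≤ (inner ℂ (T ⟨u, hu⟩) (trunc ν a u) : ℂ).re)
    (A : Lp H 2 (wMeasure ν) →ₗ.[ℂ] Lp H 2 (wMeasure ν))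
    -- `A` is monotone
    (hAmono : ∀ u : A.domain, 0 ≤ (inner ℂ (A u) (u : Lp H 2 (wMeasure ν)) : ℂ).re)
    -- `A` is causal
    (hAcausal : ∀ (a : ℝ) (u : Lp H 2 (wMeasure ν)) (hu : u ∈ A.domain),
      trunc ν a u = 0 → trunc ν a (A ⟨u, hu⟩) = 0)
    -- `𝟙_{≤0}` leaves the domain of `A` invariant
    (hA0 : ∀ u ∈ A.domain, trunc ν 0 u ∈ A.domain)
    -- `A` commutes with all translations `τ_b`
    (hAtrans : ∀ (b : ℝ) (u : Lp H 2 (wMeasure ν)) (hu : u ∈ A.domain),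
      ∃ (v : Lp H 2 (wMeasure ν)) (hv : v ∈ A.domain),
        ⇑v =ᵐ[volume] (fun t => u (t + b)) ∧
        ⇑(A ⟨v, hv⟩) =ᵐ[volume] (fun t => (A ⟨u, hu⟩) (t + b))) :
    ∀ (a : ℝ) (φ : Lp H 2 (wMeasure ν)) (hφT : φ ∈ T.domain) (hφA : φ ∈ A.domain),
      c * ‖trunc ν a φ‖ ^ 2 ≤ (inner ℂ (T ⟨φ, hφT⟩ + A ⟨φ, hφA⟩) (trunc ν a φ) : ℂ).re := by
  intro a φ hφT hφA
  obtain ⟨v, hv, hv_shift, hAv_shift⟩ := hAtrans a φ hφA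
  have hA : 0 ≤ (⟪A ⟨φ, hφA⟩, trunc ν a φ⟫_ℂ).re := by
    have h := re_inner_trunc_nonneg_of_causal hAmono (hAcausal 0) ⟨v, hv⟩ (hA0 v hv)
    rw [inner_trunc_comp_add_right hAv_shift hv_shift, Complex.real_smul, Complex.re_ofReal_mul]
      at h
    exact nonneg_of_mul_nonneg_right h (Real.exp_pos _)
  rw [inner_add_left, Complex.add_re]
  linarith [hT φ hφT a]

/-- If `T` satisfies the truncated positivity estimate and `A` is
monotone, causal, invariant under the truncation `𝟙_{≤0}` and commutes with all
translations, then `T + A` satisfies the truncated positivity estimate. -/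
theorem stmt6
    {H : Type*} [NormedAddCommGroup H] [InnerProductSpace ℂ H] [CompleteSpace H]
    (ν : ℝ) (hν : 0 < ν) (c : ℝ) (hc : 0 < c)
    (T : Lp H 2 (wMeasure ν) →ₗ.[ℂ] Lp H 2 (wMeasure ν))
    (hT : ∀ (u : Lp H 2 (wMeasure ν)) (hu : u ∈ T.domain) (a : ℝ),
      c * ‖trunc ν a u‖ ^ 2 ≤ (inner ℂ (T ⟨u, hu⟩) (trunc ν a u) : ℂ).re)
    (A : Lp H 2 (wMeasure ν) →ₗ.[ℂ] Lp H 2 (wMeasure ν))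
    -- `A` is monotone
    (hAmono : ∀ u : A.domain, 0 ≤ (inner ℂ (A u) (u : Lp H 2 (wMeasure ν)) : ℂ).re)
    -- `A` is causal
    (hAcausal : ∀ (a : ℝ) (u : Lp H 2 (wMeasure ν)) (hu : u ∈ A.domain),
      trunc ν a u = 0 → trunc ν a (A ⟨u, hu⟩) = 0)
    -- `𝟙_{≤0}` leaves the domain of `A` invariant
    (hA0 : ∀ u ∈ A.domain, trunc ν 0 u ∈ A.domain)
    -- `A` commutes with all translations `τ_b`
    (hAtrans : ∀ (b : ℝ) (u : Lp H 2 (wMeasure ν)) (hu : u ∈ A.domain),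
      ∃ (v : Lp H 2 (wMeasure ν)) (hv : v ∈ A.domain),
        ⇑v =ᵐ[volume] (fun t => u (t + b)) ∧
        ⇑(A ⟨v, hv⟩) =ᵐ[volume] (fun t => (A ⟨u, hu⟩) (t + b))) :
    ∀ (a : ℝ) (φ : Lp H 2 (wMeasure ν)) (hφT : φ ∈ T.domain) (hφA : φ ∈ A.domain),
      c * ‖trunc ν a φ‖ ^ 2 ≤ (inner ℂ (T ⟨φ, hφT⟩ + A ⟨φ, hφA⟩) (trunc ν a φ) : ℂ).re :=
  stmt6_general ν c T hT A hAmono hAcausal hA0 hAtrans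
end

section
/- Let ν₀ ≥ ν₁ ≥ 0. Let M₀ be a bounded linear causal operator on L²_{ν₀}(ℝ;H) and M₁ a bounded linear causal operator on L²_{ν₁}(ℝ;H). Suppose D is a set of measurable functions f : ℝ → H belonging to both L²_{ν₀}(ℝ;H) and L²_{ν₁}(ℝ;H), dense in L²_{ν₀}(ℝ;H), such that M₀ f = M₁ f almost everywhere for every f ∈ D. Then for every measurable f : ℝ → H belonging to both L²_{ν₀}(ℝ;H) and L²_{ν₁}(ℝ;H), one has M₀ f = M₁ f almost everywhere. -/
/-!
Fix `a`. On `(-∞, a]` the weight `exp(-2ν₁t)` is at most `exp(2(ν₀-ν₁)a) · exp(-2ν₀t)`, so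
`g ↦ 𝟙_{≤a} g` is bounded from `L²_{ν₀}` to `L²_{ν₁}`. By causality of `M₁`, the restriction
of `M₁ g` to `(-∞, a]` only depends on `𝟙_{≤a} g`; hence `g ↦ M₀ g` and `g ↦ M₁ (𝟙_{≤a} g)`,
both restricted to `(-∞, a]`, are continuous maps from `L²_{ν₀}` into `L²((-∞, a], e^{-2ν₁t}dt)`.
They agree on the dense set `D`, hence everywhere, and `a` is arbitrary.
-/

open MeasureTheory Filter

open Set
open scoped ENNReal

namespace MeasureTheory.Lp

variable {α E 𝕜 : Type*} [MeasurableSpace α] {μ : Measure α} {s : Set α} {p : ℝ≥0∞}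
  [NormedAddCommGroup E] [NormedField 𝕜] [NormedSpace 𝕜 E] [Fact (1 ≤ p)]

variable (E 𝕜 μ p) in
noncomputable def extendByZero (hs : MeasurableSet s) : Lp E p (μ.restrict s) →L[𝕜] Lp E p μ :=
  LinearMap.mkContinuous
    { toFun f := ((memLp_indicator_iff_restrict hs).2 (Lp.memLp f)).toLp (s.indicator f)
      map_add' f g := by
        refine MemLp.toLp_congr _ _ ?_ |>.trans (MemLp.toLp_add _ _)
        rw [← indicator_add']
        exact (ae_eq_restrict_iff_indicator_ae_eq hs).1 (Lp.coeFn_add f g)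
      map_smul' c f := by
        refine MemLp.toLp_congr _ _ ?_ |>.trans (MemLp.toLp_const_smul c _)
        exact ((ae_eq_restrict_iff_indicator_ae_eq hs).1 (Lp.coeFn_smul c f)).trans
          (.of_eq (indicator_const_smul s c _)) }
    1 fun f => by
      rw [one_mul, LinearMap.coe_mk, AddHom.coe_mk, Lp.norm_toLp,
        eLpNorm_indicator_eq_eLpNorm_restrict hs, Lp.norm_def]

theorem extendByZero_apply (hs : MeasurableSet s) (f : Lp E p (μ.restrict s)) :
    extendByZero E 𝕜 μ p hs f =
      ((memLp_indicator_iff_restrict hs).2 (Lp.memLp f)).toLp (s.indicator f) :=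
  rfl

variable (𝕜) in
theorem extendByZero_ae_eq_restrict (hs : MeasurableSet s) (f : Lp E p (μ.restrict s)) :
    extendByZero E 𝕜 μ p hs f =ᵐ[μ.restrict s] f := by
  rw [extendByZero_apply]
  exact EventuallyEq.trans (ae_restrict_of_ae (MemLp.coeFn_toLp _)) (indicator_ae_eq_restrict hs)

end MeasureTheory.Lp

lemma wMeasure_absolutelyContinuous (ν : ℝ) : wMeasure ν ≪ volume :=
  withDensity_absolutelyContinuous _ _

lemma absolutelyContinuous_wMeasure (ν : ℝ) : volume ≪ wMeasure ν :=
  withDensity_absolutelyContinuous' (by fun_prop) (ae_of_all _ fun t => by simp [Real.exp_pos])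

lemma wMeasure_restrict_Iic_le_smul {ν₀ ν₁ : ℝ} (h : ν₁ ≤ ν₀) (a : ℝ) :
    (wMeasure ν₁).restrict (Iic a) ≤
      ENNReal.ofReal (Real.exp (2 * (ν₀ - ν₁) * a)) • wMeasure ν₀ := by
  have hρ : (Iic a).indicator (fun t => ENNReal.ofReal (Real.exp (-2 * ν₁ * t))) ≤
      ENNReal.ofReal (Real.exp (2 * (ν₀ - ν₁) * a)) •
        fun t => ENNReal.ofReal (Real.exp (-2 * ν₀ * t)) := by
    intro t
    by_cases ht : t ∈ Iic a
    · rw [indicator_of_mem ht, Pi.smul_apply, smul_eq_mul,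
        ← ENNReal.ofReal_mul (Real.exp_nonneg _), ← Real.exp_add]
      gcongr
      nlinarith [mem_Iic.1 ht]
    · simp [ht]
  rw [wMeasure, wMeasure, ← withDensity_smul' _ _ ENNReal.ofReal_ne_top,
    restrict_withDensity measurableSet_Iic, ← withDensity_indicator measurableSet_Iic]
  exact withDensity_mono (ae_of_all _ hρ)

lemma ae_eq_of_forall_ae_restrict_Iic {β : Type*} {μ : Measure ℝ} {f g : ℝ → β}
    (h : ∀ a : ℝ, f =ᵐ[μ.restrict (Iic a)] g) : f =ᵐ[μ] g := by
  rw [EventuallyEq, ← Measure.restrict_univ (μ := μ), ← Real.iUnion_Iic_rat, ae_restrict_iUnion_iff]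
  exact fun r => h r

section WeightedL2

variable {H : Type*} [NormedAddCommGroup H]

lemma coeFn_toLp_ae_eq_coeFn_toLp {ν₀ ν₁ : ℝ} {f : ℝ → H} (h₀ : MemLp f 2 (wMeasure ν₀))
    (h₁ : MemLp f 2 (wMeasure ν₁)) : ⇑(h₀.toLp f) =ᵐ[volume] ⇑(h₁.toLp f) :=
  ((absolutelyContinuous_wMeasure ν₀).ae_eq h₀.coeFn_toLp).trans
    ((absolutelyContinuous_wMeasure ν₁).ae_eq h₁.coeFn_toLp).symm

lemma trunc_eq_zero_iff {ν a : ℝ} {f : Lp H 2 (wMeasure ν)} :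
    trunc ν a f = 0 ↔ f =ᵐ[(wMeasure ν).restrict (Iic a)] 0 := by
  rw [trunc, Lp.eq_zero_iff_ae_eq_zero, ae_eq_restrict_iff_indicator_ae_eq measurableSet_Iic,
    indicator_zero']
  exact ⟨(MemLp.coeFn_toLp _).symm.trans, (MemLp.coeFn_toLp _).trans⟩

lemma ae_restrict_Iic_eq_of_causal [NormedSpace ℂ H] {ν a : ℝ}
    (M : Lp H 2 (wMeasure ν) →L[ℂ] Lp H 2 (wMeasure ν))
    (hM : ∀ f, trunc ν a f = 0 → trunc ν a (M f) = 0) {f g : Lp H 2 (wMeasure ν)}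
    (hfg : f =ᵐ[(wMeasure ν).restrict (Iic a)] g) :
    M f =ᵐ[(wMeasure ν).restrict (Iic a)] M g := by
  have hsub : M (f - g) =ᵐ[(wMeasure ν).restrict (Iic a)] 0 := by
    refine trunc_eq_zero_iff.1 (hM _ (trunc_eq_zero_iff.2 ?_))
    filter_upwards [ae_restrict_of_ae (Lp.coeFn_sub f g), hfg] with t ht hfgt
    rw [ht, Pi.sub_apply, hfgt, sub_self, Pi.zero_apply]
  filter_upwards [ae_restrict_of_ae (Lp.coeFn_sub (M f) (M g)), hsub] with t ht hsubt
  rw [map_sub, ht, Pi.sub_apply, Pi.zero_apply, sub_eq_zero] at hsubt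
  exact hsubt

variable [NormedSpace ℝ H] {ν₀ ν₁ : ℝ} (hν : ν₁ ≤ ν₀) (a : ℝ)

noncomputable def restrictIicCLM :
    Lp H 2 (wMeasure ν₀) →L[ℝ] Lp H 2 ((wMeasure ν₁).restrict (Iic a)) :=
  Lp.LpToLpOfMeasureLeSMul ENNReal.ofReal_ne_top (wMeasure_restrict_Iic_le_smul hν a)

noncomputable def truncCLM : Lp H 2 (wMeasure ν₀) →L[ℝ] Lp H 2 (wMeasure ν₁) :=
  Lp.extendByZero H ℝ (wMeasure ν₁) 2 measurableSet_Iic ∘L restrictIicCLM hν a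

lemma restrictIicCLM_ae_eq (g : Lp H 2 (wMeasure ν₀)) :
    restrictIicCLM hν a g =ᵐ[(wMeasure ν₁).restrict (Iic a)] g :=
  Lp.coeFn_LpToLpOfMeasureLeSMul _ _ g

lemma truncCLM_ae_eq (g : Lp H 2 (wMeasure ν₀)) :
    truncCLM hν a g =ᵐ[(wMeasure ν₁).restrict (Iic a)] g :=
  (Lp.extendByZero_ae_eq_restrict ℝ measurableSet_Iic (restrictIicCLM hν a g)).trans
    (restrictIicCLM_ae_eq hν a g)

lemma ae_restrict_Iic_eq_iff [NormedSpace ℂ H]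
    (M₀ : Lp H 2 (wMeasure ν₀) →L[ℂ] Lp H 2 (wMeasure ν₀))
    (M₁ : Lp H 2 (wMeasure ν₁) →L[ℂ] Lp H 2 (wMeasure ν₁))
    (hM₁ : ∀ f, trunc ν₁ a f = 0 → trunc ν₁ a (M₁ f) = 0)
    {g : Lp H 2 (wMeasure ν₀)} {h : Lp H 2 (wMeasure ν₁)} (hgh : g =ᵐ[volume] h) :
    M₀ g =ᵐ[(wMeasure ν₁).restrict (Iic a)] M₁ h ↔
      restrictIicCLM hν a (M₀ g) =
        LpToLpRestrictCLM ℝ H ℝ (wMeasure ν₁) 2 (Iic a) (M₁ (truncCLM hν a g)) := by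
  have hg : g =ᵐ[(wMeasure ν₁).restrict (Iic a)] h :=
    ae_restrict_of_ae ((wMeasure_absolutelyContinuous ν₁).ae_eq hgh)
  have h₀ := restrictIicCLM_ae_eq hν a (M₀ g)
  have h₁ := (LpToLpRestrictCLM_coeFn ℝ (Iic a) (M₁ (truncCLM hν a g))).trans
    (ae_restrict_Iic_eq_of_causal M₁ hM₁ ((truncCLM_ae_eq hν a g).trans hg))
  rw [Lp.ext_iff]
  exact ⟨fun e => h₀.trans (e.trans h₁.symm), fun e => h₀.symm.trans (e.trans h₁)⟩

end WeightedL2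

theorem stmt13_general
    {H : Type*} [NormedAddCommGroup H] [InnerProductSpace ℂ H]
    (ν₀ ν₁ : ℝ) (hν₀₁ : ν₁ ≤ ν₀)
    (M₀ : Lp H 2 (wMeasure ν₀) →L[ℂ] Lp H 2 (wMeasure ν₀))
    (M₁ : Lp H 2 (wMeasure ν₁) →L[ℂ] Lp H 2 (wMeasure ν₁))
    (hM₁causal : ∀ (a : ℝ) (f : Lp H 2 (wMeasure ν₁)),
      trunc ν₁ a f = 0 → trunc ν₁ a (M₁ f) = 0)
    (D : Set (ℝ → H))
    (hD : ∀ f ∈ D, MemLp f 2 (wMeasure ν₀) ∧ MemLp f 2 (wMeasure ν₁))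
    (hdense : Dense {g : Lp H 2 (wMeasure ν₀) | ∃ (f : ℝ → H) (hf : f ∈ D),
      g = MemLp.toLp f (hD f hf).1})
    (hagree : ∀ (f : ℝ → H) (hf : f ∈ D),
      ⇑(M₀ (MemLp.toLp f (hD f hf).1)) =ᵐ[volume] ⇑(M₁ (MemLp.toLp f (hD f hf).2))) :
    ∀ (f : ℝ → H) (h₀ : MemLp f 2 (wMeasure ν₀)) (h₁ : MemLp f 2 (wMeasure ν₁)),
      ⇑(M₀ (MemLp.toLp f h₀)) =ᵐ[volume] ⇑(M₁ (MemLp.toLp f h₁)) := by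
  intro f h₀ h₁
  refine (absolutelyContinuous_wMeasure ν₁).ae_eq (ae_eq_of_forall_ae_restrict_Iic fun a => ?_)
  have hagree_on_D : EqOn (fun g => restrictIicCLM hν₀₁ a (M₀ g))
      (fun g => LpToLpRestrictCLM ℝ H ℝ (wMeasure ν₁) 2 (Iic a) (M₁ (truncCLM hν₀₁ a g)))
      {g | ∃ (φ : ℝ → H) (hφ : φ ∈ D), g = MemLp.toLp φ (hD φ hφ).1} := by
    rintro _ ⟨φ, hφ, rfl⟩
    refine (ae_restrict_Iic_eq_iff hν₀₁ a M₀ M₁ (hM₁causal a)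
      (coeFn_toLp_ae_eq_coeFn_toLp _ (hD φ hφ).2)).1 ?_
    exact ae_restrict_of_ae ((wMeasure_absolutelyContinuous ν₁).ae_eq (hagree φ hφ))
  have hagree_all := Continuous.ext_on hdense (by fun_prop) (by fun_prop) hagree_on_D
  exact (ae_restrict_Iic_eq_iff hν₀₁ a M₀ M₁ (hM₁causal a)
    (coeFn_toLp_ae_eq_coeFn_toLp h₀ h₁)).2 (congrFun hagree_all _)

/-- Two bounded causal operators on `L²_{ν₀}` and `L²_{ν₁}` that agree
on a set `D` of functions, dense in `L²_{ν₀}`, agree on every function belonging to both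
spaces. -/
theorem stmt13
    {H : Type*} [NormedAddCommGroup H] [InnerProductSpace ℂ H] [CompleteSpace H]
    (ν₀ ν₁ : ℝ) (hν₁ : 0 ≤ ν₁) (hν₀₁ : ν₁ ≤ ν₀)
    (M₀ : Lp H 2 (wMeasure ν₀) →L[ℂ] Lp H 2 (wMeasure ν₀))
    (M₁ : Lp H 2 (wMeasure ν₁) →L[ℂ] Lp H 2 (wMeasure ν₁))
    (hM₀causal : ∀ (a : ℝ) (f : Lp H 2 (wMeasure ν₀)),
      trunc ν₀ a f = 0 → trunc ν₀ a (M₀ f) = 0)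
    (hM₁causal : ∀ (a : ℝ) (f : Lp H 2 (wMeasure ν₁)),
      trunc ν₁ a f = 0 → trunc ν₁ a (M₁ f) = 0)
    (D : Set (ℝ → H))
    (hD : ∀ f ∈ D, MemLp f 2 (wMeasure ν₀) ∧ MemLp f 2 (wMeasure ν₁))
    (hdense : Dense {g : Lp H 2 (wMeasure ν₀) | ∃ (f : ℝ → H) (hf : f ∈ D),
      g = MemLp.toLp f (hD f hf).1})
    (hagree : ∀ (f : ℝ → H) (hf : f ∈ D),
      ⇑(M₀ (MemLp.toLp f (hD f hf).1)) =ᵐ[volume] ⇑(M₁ (MemLp.toLp f (hD f hf).2))) :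
    ∀ (f : ℝ → H) (h₀ : MemLp f 2 (wMeasure ν₀)) (h₁ : MemLp f 2 (wMeasure ν₁)),
      ⇑(M₀ (MemLp.toLp f h₀)) =ᵐ[volume] ⇑(M₁ (MemLp.toLp f h₁)) :=
  stmt13_general ν₀ ν₁ hν₀₁ M₀ M₁ hM₁causal D hD hdense hagree
end
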